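/- Let n ≥ 1. For every integer j ≥ 1, the degree-j homogeneous component of the invariant algebra ℂ⟨u,v⟩^{D_{2n}} is spanned over ℂ by the elements (u^b v^c + v^b u^c)∘σ, where b, c ≥ 0 are integers with b + c = j and b ≡ c (mod n), and σ ∈ Sym(j). In particular, ℂ⟨u,v⟩^{D_{2n}} is generated as an S-algebra by the elements s_a = u^a v^a + v^a u^a (a ≥ 1) and p_{(b,c)} = u^b v^c + v^b u^c (b ≡ c mod n). -/

import Mathlib

open scoped Real

noncomputable section

/-- Words in two letters. -/
abbrev FW := FreeMonoid (Fin 2)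

/-- The free associative unital ℂ-algebra on two generators. -/
abbrev FA := MonoidAlgebra ℂ FW

/-- The generator `u`. -/
def gu : FA := MonoidAlgebra.of ℂ FW (FreeMonoid.of 0)

/-- The generator `v`. -/
def gv : FA := MonoidAlgebra.of ℂ FW (FreeMonoid.of 1)

/-- The algebra endomorphism `ρ` with `ρ(u) = ξ u`, `ρ(v) = ξ⁻¹ v`, `ξ = exp(2πi/n)`. -/
def dRho (n : ℕ) : FA →ₐ[ℂ] FA :=
  MonoidAlgebra.lift ℂ FA FW
    (FreeMonoid.lift fun i : Fin 2 =>
      if i = 0 then Complex.exp (2 * Real.pi * Complex.I / n) • gu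
      else (Complex.exp (2 * Real.pi * Complex.I / n))⁻¹ • gv)

/-- The algebra endomorphism `τ` exchanging `u` and `v`. -/
def dTau : FA →ₐ[ℂ] FA :=
  MonoidAlgebra.lift ℂ FA FW
    (FreeMonoid.lift fun i : Fin 2 => if i = 0 then gv else gu)

/-- The invariant algebra `ℂ⟨u,v⟩^{D_{2n}}`. -/
def invAlg (n : ℕ) : Subalgebra ℂ FA :=
  AlgHom.equalizer (dRho n) (AlgHom.id ℂ FA) ⊓ AlgHom.equalizer dTau (AlgHom.id ℂ FA)

/-- The degree-`j` homogeneous component of `ℂ⟨u,v⟩`: the span of words of length `j`. -/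
def degComp (j : ℕ) : Submodule ℂ FA :=
  MonoidAlgebra.supported ℂ ℂ {w : FW | FreeMonoid.length w = j}

/-- Koryukin's position permutation on words: if `w` has length `k`, the `i`-th letter of
`w ∘ σ` is the `σ⁻¹(i)`-th letter of `w`; words of other lengths are left unchanged. -/
def wordPerm (k : ℕ) (σ : Equiv.Perm (Fin k)) (w : FW) : FW :=
  if h : (FreeMonoid.toList w).length = k then
    FreeMonoid.ofList
      (List.ofFn fun i : Fin k => (FreeMonoid.toList w).get (finCongr h.symm (σ⁻¹ i)))
  else w

/-- Koryukin's action of `Sym(k)`, extended ℂ-linearly. -/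
def koryukin (k : ℕ) (σ : Equiv.Perm (Fin k)) : FA →ₗ[ℂ] FA :=
  MonoidAlgebra.mapDomainLinearMap ℂ ℂ (wordPerm k σ)

/-- A subalgebra is graded if it contains every homogeneous component of each of
its elements. -/
def IsGradedSub (D : Subalgebra ℂ FA) : Prop :=
  ∀ f ∈ D, ∀ j : ℕ, MonoidAlgebra.ofCoeff (Finsupp.filter (fun w : FW => FreeMonoid.length w = j) f.coeff) ∈ D

/-- A subalgebra is permutation-closed if it is closed under Koryukin's action on
homogeneous elements. -/
def PermClosed (D : Subalgebra ℂ FA) : Prop :=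
  ∀ (k : ℕ) (σ : Equiv.Perm (Fin k)), ∀ f ∈ D, f ∈ degComp k → koryukin k σ f ∈ D

/-!
`ρ` acts diagonally on words, multiplying `w` by `ξ ^ (|w|_u - |w|_v)`, so a `ρ`-invariant element
is supported on words with `|w|_u ≡ |w|_v (mod n)`; a `τ`-invariant `f` equals
`½ ∑_w f_w (w + τ w)`. Koryukin's action only permutes letter positions, so it commutes with
`τ` and the orbit of `u^b v^c` is exactly the set of words with `b` letters `u` and `c` letters
`v`. Hence the translates of `u^b v^c + v^b u^c` are precisely the symmetrised words `w + τ w`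
with `w` of length `j` and `|w|_u ≡ |w|_v (mod n)`, and these span the invariants of degree `j`.
-/

theorem FreeMonoid.toList_of_pow {α : Type*} (a : α) (m : ℕ) :
    (FreeMonoid.of a ^ m).toList = List.replicate m a := by
  induction m with
  | zero => rfl
  | succ m ih => rw [pow_succ, FreeMonoid.toList_mul, ih, List.replicate_succ']; rfl

section wordPerm

variable {k : ℕ} (σ : Equiv.Perm (Fin k))

theorem toList_wordPerm {w : FW} (hw : w.toList.length = k) :
    (wordPerm k σ w).toList = List.ofFn fun i => w.toList[(σ⁻¹ i : ℕ)] := by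
  simp [wordPerm, hw]

theorem toList_wordPerm_perm (w : FW) : (wordPerm k σ w).toList.Perm w.toList := by
  by_cases hw : w.toList.length = k
  · subst hw
    rw [toList_wordPerm σ rfl]
    exact (σ⁻¹.ofFn_comp_perm fun i => w.toList[(i : ℕ)]).trans (by rw [List.ofFn_getElem])
  · simp [wordPerm, hw]

theorem exists_wordPerm_eq {w w' : FW} (hw : w.toList.length = k) (h : w.toList.Perm w'.toList) :
    ∃ σ : Equiv.Perm (Fin k), wordPerm k σ w = w' := by
  have hw' : w'.toList.length = k := h.length_eq ▸ hw
  let e := Equiv.ofBijective _ ⟨h.symm.idxBij_injective, h.symm.idxBij_surjective⟩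
  refine ⟨((finCongr hw'.symm).trans (e.trans (finCongr hw)))⁻¹, ?_⟩
  apply FreeMonoid.toList.injective
  rw [toList_wordPerm _ hw]
  simp only [inv_inv]
  refine List.ext_getElem (by simp [hw']) fun i _ _ => ?_
  simp only [List.getElem_ofFn, Equiv.trans_apply, finCongr_apply, Fin.val_cast]
  exact h.symm.getElem_idxBij_eq_getElem ⟨i, by omega⟩

theorem wordPerm_map {f : Fin 2 → Fin 2} (w : FW) :
    wordPerm k σ (FreeMonoid.map f w) = FreeMonoid.map f (wordPerm k σ w) := by
  by_cases hw : w.toList.length = k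
  · have hfw : (FreeMonoid.map f w).toList.length = k := by simpa [FreeMonoid.toList_map]
    apply FreeMonoid.toList.injective
    simp [toList_wordPerm σ hfw, FreeMonoid.toList_map, toList_wordPerm σ hw, List.map_ofFn,
      Function.comp_def]
  · simp [wordPerm, hw]

end wordPerm

theorem toList_of_pow_mul_of_pow (b c : ℕ) :
    (FreeMonoid.of (0 : Fin 2) ^ b * FreeMonoid.of 1 ^ c).toList =
      List.replicate b 0 ++ List.replicate c 1 := by
  rw [FreeMonoid.toList_mul, FreeMonoid.toList_of_pow, FreeMonoid.toList_of_pow]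

theorem perm_toList_of_pow_count_mul_of_pow_count (w : FW) :
    (FreeMonoid.of (0 : Fin 2) ^ w.toList.count 0 * FreeMonoid.of 1 ^ w.toList.count 1).toList.Perm
      w.toList := by
  rw [toList_of_pow_mul_of_pow, List.perm_iff_count]
  intro a
  fin_cases a <;> simp [List.count_replicate]

def IsBalancedMod (n : ℕ) (w : FW) : Prop :=
  (w.toList.count 0 : ℤ) ≡ w.toList.count 1 [ZMOD n]

theorem isBalancedMod_map_rev_iff {n : ℕ} {w : FW} :
    IsBalancedMod n (FreeMonoid.map Fin.rev w) ↔ IsBalancedMod n w := by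
  have hrev (a : Fin 2) : (FreeMonoid.map Fin.rev w).toList.count a = w.toList.count a.rev := by
    rw [FreeMonoid.toList_map, ← Fin.rev_rev a, List.count_map_of_injective _ _ Fin.rev_injective,
      Fin.rev_rev]
  rw [IsBalancedMod, IsBalancedMod, hrev, hrev, Int.modEq_comm]
  rfl

theorem isBalancedMod_iff_of_perm {n : ℕ} {w w' : FW} (h : w.toList.Perm w'.toList) :
    IsBalancedMod n w ↔ IsBalancedMod n w' := by
  simp only [IsBalancedMod, h.count_eq]

theorem exp_zpow_eq_one_iff_isBalancedMod {n : ℕ} (hn : n ≠ 0) (w : FW) :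
    Complex.exp (2 * Real.pi * Complex.I / n) ^ ((w.toList.count 0 : ℤ) - w.toList.count 1) = 1 ↔
      IsBalancedMod n w := by
  rw [(Complex.isPrimitiveRoot_exp n hn).zpow_eq_one_iff_dvd, IsBalancedMod, Int.modEq_comm,
    Int.modEq_iff_dvd]

theorem dTau_of (w : FW) :
    dTau (MonoidAlgebra.of ℂ FW w) = MonoidAlgebra.of ℂ FW (FreeMonoid.map Fin.rev w) := by
  suffices (dTau : FA →* FA).comp (MonoidAlgebra.of ℂ FW) =
      (MonoidAlgebra.of ℂ FW).comp (FreeMonoid.map Fin.rev) from DFunLike.congr_fun this w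
  refine FreeMonoid.hom_eq fun i => ?_
  fin_cases i <;> simp [dTau, gu, gv]

theorem map_rev_map_rev (w : FW) : FreeMonoid.map Fin.rev (FreeMonoid.map Fin.rev w) = w :=
  FreeMonoid.toList.injective (by simp [FreeMonoid.toList_map, Function.comp_def])

theorem dRho_of (n : ℕ) (w : FW) :
    dRho n (MonoidAlgebra.of ℂ FW w) =
      Complex.exp (2 * Real.pi * Complex.I / n) ^ ((w.toList.count 0 : ℤ) - w.toList.count 1) •
        MonoidAlgebra.of ℂ FW w := by
  have hξ : Complex.exp (2 * Real.pi * Complex.I / n) ≠ 0 := Complex.exp_ne_zero _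
  induction w using FreeMonoid.inductionOn with
  | one => simp only [map_one, FreeMonoid.toList_one]; simp
  | of i => fin_cases i <;> simp [dRho, gu, gv]
  | mul x y hx hy =>
    rw [map_mul, map_mul, hx, hy, smul_mul_smul_comm, ← zpow_add₀ hξ, FreeMonoid.toList_mul,
      List.count_append, List.count_append]
    push_cast
    ring_nf

theorem dRho_of_eq_self {n : ℕ} (hn : n ≠ 0) {w : FW} (hw : IsBalancedMod n w) :
    dRho n (MonoidAlgebra.of ℂ FW w) = MonoidAlgebra.of ℂ FW w := by
  rw [dRho_of, (exp_zpow_eq_one_iff_isBalancedMod hn w).2 hw, one_smul]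

theorem coeff_dRho (n : ℕ) (f : FA) (w : FW) :
    (dRho n f).coeff w =
      Complex.exp (2 * Real.pi * Complex.I / n) ^ ((w.toList.count 0 : ℤ) - w.toList.count 1) *
        f.coeff w := by
  induction f using MonoidAlgebra.induction_linear with
  | zero => simp
  | add f g hf hg => simp [hf, hg, mul_add]
  | single a c =>
    rw [← MonoidAlgebra.smul_of, map_smul, dRho_of, smul_smul, MonoidAlgebra.smul_of]
    by_cases h : a = w
    · subst h; simp [mul_comm]
    · simp [MonoidAlgebra.coeff_single, h]

theorem isBalancedMod_of_mem_support {n : ℕ} (hn : n ≠ 0) {f : FA} (hf : dRho n f = f) {w : FW}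
    (hw : w ∈ f.coeff.support) : IsBalancedMod n w := by
  have h := coeff_dRho n f w
  rw [hf] at h
  exact (exp_zpow_eq_one_iff_isBalancedMod hn w).1
    ((mul_eq_right₀ (Finsupp.mem_support_iff.1 hw)).1 h.symm)

/-- On `Fin 2`, `Fin.rev` swaps the letters `u = 0` and `v = 1`, so this is `w + τ w`. -/
def symWord (w : FW) : FA :=
  MonoidAlgebra.of ℂ FW w + MonoidAlgebra.of ℂ FW (FreeMonoid.map Fin.rev w)

theorem symWord_mem_invAlg {n : ℕ} (hn : n ≠ 0) {w : FW} (hw : IsBalancedMod n w) :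
    symWord w ∈ invAlg n := by
  refine ⟨?_, ?_⟩
  · change dRho n (symWord w) = symWord w
    rw [symWord, map_add, dRho_of_eq_self hn hw,
      dRho_of_eq_self hn (isBalancedMod_map_rev_iff.2 hw)]
  · change dTau (symWord w) = symWord w
    rw [symWord, map_add, dTau_of, dTau_of, map_rev_map_rev, add_comm]

theorem symWord_mem_degComp {j : ℕ} {w : FW} (hw : w.length = j) : symWord w ∈ degComp j := by
  have hrev : (FreeMonoid.map Fin.rev w).length = j := by
    simpa [FreeMonoid.length, FreeMonoid.toList_map] using hw
  refine add_mem ?_ ?_ <;> simp [degComp, MonoidAlgebra.mem_supported, MonoidAlgebra.of_apply,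
    MonoidAlgebra.coeff_single, hw, hrev]

theorem add_dTau_eq_sum_symWord (f : FA) : f + dTau f = f.coeff.sum fun w c => c • symWord w := by
  conv_lhs => rw [← f.sum_coeff_single]
  simp only [Finsupp.sum, map_sum, ← Finset.sum_add_distrib, ← MonoidAlgebra.smul_of, map_smul,
    dTau_of, symWord, smul_add]

theorem invAlg_inf_degComp_eq_span {n : ℕ} (hn : n ≠ 0) (j : ℕ) :
    (invAlg n).toSubmodule ⊓ degComp j =
      Submodule.span ℂ (symWord '' {w | w.length = j ∧ IsBalancedMod n w}) := by
  refine le_antisymm ?_ (Submodule.span_le.2 ?_)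
  · rintro f ⟨⟨hρ, hτ⟩, hdeg⟩
    change dRho n f = f at hρ
    change dTau f = f at hτ
    have hf : f = (2 : ℂ)⁻¹ • (f + dTau f) := by
      rw [hτ, ← two_smul ℂ f, smul_smul, inv_mul_cancel₀ two_ne_zero, one_smul]
    rw [hf, add_dTau_eq_sum_symWord]
    refine Submodule.smul_mem _ _ (Submodule.sum_mem _ fun w hw => Submodule.smul_mem _ _ ?_)
    exact Submodule.subset_span
      ⟨w, ⟨MonoidAlgebra.mem_supported.1 hdeg hw, isBalancedMod_of_mem_support hn hρ hw⟩, rfl⟩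
  · rintro _ ⟨w, ⟨hlen, hbal⟩, rfl⟩
    exact ⟨symWord_mem_invAlg hn hbal, symWord_mem_degComp hlen⟩

theorem koryukin_symWord (k : ℕ) (σ : Equiv.Perm (Fin k)) (w : FW) :
    koryukin k σ (symWord w) = symWord (wordPerm k σ w) := by
  simp only [symWord, map_add, MonoidAlgebra.of_apply, koryukin,
    MonoidAlgebra.mapDomainLinearMap_single, wordPerm_map]

theorem gu_pow_mul_gv_pow_add (b c : ℕ) :
    gu ^ b * gv ^ c + gv ^ b * gu ^ c =
      symWord (FreeMonoid.of 0 ^ b * FreeMonoid.of 1 ^ c) := by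
  simp [symWord, gu, gv, map_mul, map_pow, FreeMonoid.map_of]

theorem koryukin_translates_eq_image (n j : ℕ) :
    {x : FA | ∃ b c : ℕ, b + c = j ∧ (b : ℤ) ≡ (c : ℤ) [ZMOD n] ∧
      ∃ σ : Equiv.Perm (Fin j), x = koryukin j σ (gu ^ b * gv ^ c + gv ^ b * gu ^ c)} =
      symWord '' {w | w.length = j ∧ IsBalancedMod n w} := by
  ext x
  constructor
  · rintro ⟨b, c, hbc, hmod, σ, rfl⟩
    have hperm := toList_wordPerm_perm σ (FreeMonoid.of (0 : Fin 2) ^ b * FreeMonoid.of 1 ^ c)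
    refine ⟨_, ⟨?_, ?_⟩, (gu_pow_mul_gv_pow_add b c ▸ koryukin_symWord j σ _).symm⟩
    · rw [FreeMonoid.length, hperm.length_eq, toList_of_pow_mul_of_pow]
      simp [hbc]
    · rw [isBalancedMod_iff_of_perm hperm, IsBalancedMod, toList_of_pow_mul_of_pow]
      simpa [List.count_replicate] using hmod
  · rintro ⟨w, ⟨hlen, hbal⟩, rfl⟩
    have hperm := perm_toList_of_pow_count_mul_of_pow_count w
    have hbc : w.toList.count 0 + w.toList.count 1 = j := by
      have := hperm.length_eq.trans hlen
      rwa [toList_of_pow_mul_of_pow, List.length_append, List.length_replicate,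
        List.length_replicate] at this
    obtain ⟨σ, hσ⟩ := exists_wordPerm_eq (hperm.length_eq.trans hlen) hperm
    exact ⟨_, _, hbc, hbal, σ, by rw [gu_pow_mul_gv_pow_add, koryukin_symWord, hσ]⟩

theorem invAlg_degComp_spanned_by_koryukin_translates_general (n : ℕ) (hn : 1 ≤ n) (j : ℕ) :
    (invAlg n).toSubmodule ⊓ degComp j =
      Submodule.span ℂ
        {x : FA | ∃ b c : ℕ, b + c = j ∧ (b : ℤ) ≡ (c : ℤ) [ZMOD n] ∧
          ∃ σ : Equiv.Perm (Fin j),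
            x = koryukin j σ (gu ^ b * gv ^ c + gv ^ b * gu ^ c)} := by
  rw [koryukin_translates_eq_image, invAlg_inf_degComp_eq_span (Nat.one_le_iff_ne_zero.mp hn)]

/-- The degree-`j` homogeneous component of `ℂ⟨u,v⟩^{D_{2n}}` is spanned by the Koryukin
translates `(u^b v^c + v^b u^c) ∘ σ` with `b + c = j`, `b ≡ c (mod n)`, `σ ∈ Sym(j)`. -/
theorem invAlg_degComp_spanned_by_koryukin_translates (n : ℕ) (hn : 1 ≤ n) (j : ℕ)
    (hj : 1 ≤ j) :
    (invAlg n).toSubmodule ⊓ degComp j =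
      Submodule.span ℂ
        {x : FA | ∃ b c : ℕ, b + c = j ∧ (b : ℤ) ≡ (c : ℤ) [ZMOD n] ∧
          ∃ σ : Equiv.Perm (Fin j),
            x = koryukin j σ (gu ^ b * gv ^ c + gv ^ b * gu ^ c)} :=
  invAlg_degComp_spanned_by_koryukin_translates_general n hn j

end
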